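/- arXiv:2011.13163 — 2 statements merged into one kernel-verified Lean document; each statement's English description precedes it below -/
import Mathlib

section
/- Let f : ℕ → ℤ be strictly increasing with f(0) = −1 and f(x) ≥ x for every integer x ≥ 1, and assume every agent's centrality is degree homophilic with f. Let h be an APSN, let m be the maximum degree of h, let n₁* be the least k ∈ ℕ with f(k) ≥ m, and for k ≥ 2 let n_k* be the least r ∈ ℕ with f(r) ≥ n_{k−1}*. Then for all distinct vertices i, j: (a) if deg_h(i) ≥ n₁* and deg_h(j) ≥ n₁* then ij ∈ E(h); (b) if for some k ≥ 2 both n_k* ≤ deg_h(i) ≤ n_{k−1}* and n_k* ≤ deg_h(j) ≤ n_{k−1}*, then ij ∈ E(h); (c) if for some k ≥ 2, deg_h(i) ≤ n_k* and deg_h(j) > n_{k−1}*, then ij ∉ E(h). -/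
open SimpleGraph

/-- Degree of vertex `i` in network `g`. -/
noncomputable def deg {V : Type*} (g : SimpleGraph V) (i : V) : ℕ :=
  Nat.card (g.neighborSet i)

/-- The network `g` with the (missing) edge `ij` added. -/
def addE {V : Type*} (g : SimpleGraph V) (i j : V) : SimpleGraph V :=
  g ⊔ SimpleGraph.fromEdgeSet {s(i, j)}

/-- The network `g` with the edge `ij` removed. -/
def delE {V : Type*} (g : SimpleGraph V) (i j : V) : SimpleGraph V :=
  g.deleteEdges {s(i, j)}

/-- Utility of agent `i` in the game with centralities `C` and edge cost `c`. -/
noncomputable def util {V : Type*} (C : V → SimpleGraph V → ℝ) (c : ℝ) (i : V)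
    (g : SimpleGraph V) : ℝ :=
  C i g - c * (deg g i)

/-- Adding the missing edge `ij` is an improving move. -/
def ImprovingAdd {V : Type*} (C : V → SimpleGraph V → ℝ) (c : ℝ) (g : SimpleGraph V)
    (i j : V) : Prop :=
  util C c i (addE g i j) ≥ util C c i g ∧ util C c j (addE g i j) ≥ util C c j g ∧
    (util C c i (addE g i j) > util C c i g ∨ util C c j (addE g i j) > util C c j g)

/-- Deleting the edge `ij` is an improving move. -/
def ImprovingDel {V : Type*} (C : V → SimpleGraph V → ℝ) (c : ℝ) (g : SimpleGraph V)
    (i j : V) : Prop :=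
  util C c i (delE g i j) > util C c i g ∨ util C c j (delE g i j) > util C c j g

/-- `g` is pairwise stable at edge cost `c`. -/
def PairwiseStable {V : Type*} (C : V → SimpleGraph V → ℝ) (c : ℝ) (g : SimpleGraph V) : Prop :=
  (∀ i j : V, i ≠ j → ¬ g.Adj i j → ¬ ImprovingAdd C c g i j) ∧
  (∀ i j : V, g.Adj i j → ¬ ImprovingDel C c g i j)

/-- `g` is asymptotically pairwise stable. -/
def APSN {V : Type*} (C : V → SimpleGraph V → ℝ) (g : SimpleGraph V) : Prop :=
  ∃ ε₀ : ℝ, 0 < ε₀ ∧ ∀ c : ℝ, 0 < c → c < ε₀ → PairwiseStable C c g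

/-- Axiom 1: the centrality of agent `i` is increasing. -/
def Axiom1 {V : Type*} (C : V → SimpleGraph V → ℝ) (i : V) : Prop :=
  ∀ (g : SimpleGraph V) (j : V), j ≠ i → ¬ g.Adj i j → C i (addE g i j) > C i g

/-- Axiom 1′: the centrality of agent `i` is decreasing. -/
def Axiom1' {V : Type*} (C : V → SimpleGraph V → ℝ) (i : V) : Prop :=
  ∀ (g : SimpleGraph V) (j : V), j ≠ i → ¬ g.Adj i j → C i (addE g i j) < C i g

/-- Axiom 2: the centrality of agent `i` is componentwise. -/
def Axiom2 {V : Type*} (C : V → SimpleGraph V → ℝ) (i : V) : Prop :=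
  ∀ (g : SimpleGraph V) (j : V), j ≠ i → ¬ g.Adj i j →
    ((g.Reachable i j → C i (addE g i j) > C i g) ∧
     (¬ g.Reachable i j → C i (addE g i j) ≤ C i g))

/-- Axiom 2′: the centrality of agent `i` is peripheral. -/
def Axiom2' {V : Type*} (C : V → SimpleGraph V → ℝ) (i : V) : Prop :=
  ∀ (g : SimpleGraph V) (j : V), j ≠ i → ¬ g.Adj i j →
    ((g.Reachable i j → C i (addE g i j) ≤ C i g) ∧
     (¬ g.Reachable i j → C i (addE g i j) > C i g))

/-- The centrality of agent `i` is degree homophilic with (strictly increasing) `f`. -/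
def DegreeHomophilic {V : Type*} (C : V → SimpleGraph V → ℝ) (i : V) (f : ℕ → ℤ) : Prop :=
  ∀ (g : SimpleGraph V) (j : V), j ≠ i → ¬ g.Adj i j →
    (C i (addE g i j) > C i g ↔ (deg g j : ℤ) ≤ f (deg g i))

/-! As the edge cost `c` tends to `0`, stability of `h` leaves only the centrality effects of
single-edge moves. A missing edge `ij` must not raise both `C i` and `C j`, so by homophily
`deg j ≤ f (deg i)` and `deg i ≤ f (deg j)` cannot both hold; monotonicity of `f` then gives
(a) and (b). An existing edge `ij` must not be worth deleting, so `C i` drops when it is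
removed; homophily in `h - ij` gives `deg j - 1 ≤ f (deg i - 1)`, which together with the
minimality of `n_k*` gives (c). -/

section Graph

variable {V : Type*} (g : SimpleGraph V)

lemma addE_comm (i j : V) : addE g i j = addE g j i := by
  rw [addE, addE, Sym2.eq_swap]

lemma delE_not_adj (i j : V) : ¬ (delE g i j).Adj i j := by
  simp [delE]

variable {i j : V}

lemma addE_delE (hadj : g.Adj i j) : addE (delE g i j) i j = g := by
  ext a b
  simp only [addE, delE, sup_adj, deleteEdges_adj, fromEdgeSet_adj, Set.mem_singleton_iff]
  constructor
  · rintro (⟨hab, -⟩ | ⟨hab, -⟩)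
    · exact hab
    · rcases Sym2.eq_iff.1 hab with ⟨rfl, rfl⟩ | ⟨rfl, rfl⟩
      exacts [hadj, hadj.symm]
  · intro hab
    by_cases he : s(a, b) = s(i, j)
    exacts [Or.inr ⟨he, hab.ne⟩, Or.inl ⟨hab, he⟩]

lemma neighborSet_addE (hne : i ≠ j) :
    (addE g i j).neighborSet i = insert j (g.neighborSet i) := by
  ext x
  simp only [addE, mem_neighborSet, sup_adj, fromEdgeSet_adj, Set.mem_singleton_iff,
    Set.mem_insert_iff, Sym2.eq_iff]
  grind

variable [Fintype V]

lemma deg_pos_of_adj (hadj : g.Adj i j) : 0 < deg g i :=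
  Nat.card_pos_iff.2 ⟨⟨⟨j, hadj⟩⟩, inferInstance⟩

lemma deg_addE_left (hne : i ≠ j) (hadj : ¬ g.Adj i j) : deg (addE g i j) i = deg g i + 1 := by
  rw [deg, deg, neighborSet_addE g hne, Nat.card_coe_set_eq, Nat.card_coe_set_eq,
    Set.ncard_insert_of_notMem (show j ∉ g.neighborSet i from hadj)]

lemma deg_addE_right (hne : i ≠ j) (hadj : ¬ g.Adj i j) : deg (addE g i j) j = deg g j + 1 := by
  rw [addE_comm]
  exact deg_addE_left g hne.symm (mt g.adj_symm hadj)

end Graph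

section Utility

variable {V : Type*} [Fintype V] (C : V → SimpleGraph V → ℝ) (c : ℝ) (g : SimpleGraph V) {i j : V}

lemma util_addE_left_sub (hne : i ≠ j) (hadj : ¬ g.Adj i j) :
    util C c i (addE g i j) - util C c i g = C i (addE g i j) - C i g - c := by
  rw [util, util, deg_addE_left g hne hadj]
  push_cast
  ring

lemma util_addE_right_sub (hne : i ≠ j) (hadj : ¬ g.Adj i j) :
    util C c j (addE g i j) - util C c j g = C j (addE g i j) - C j g - c := by
  rw [util, util, deg_addE_right g hne hadj]
  push_cast
  ring

end Utility

namespace APSN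

variable {V : Type*} [Fintype V] {C : V → SimpleGraph V → ℝ} {h : SimpleGraph V} {i j : V}

theorem adj_of_centrality_lt (hst : APSN C h) (hne : i ≠ j) (hi : C i h < C i (addE h i j))
    (hj : C j h < C j (addE h i j)) : h.Adj i j := by
  by_contra hadj
  obtain ⟨ε, hε, hstable⟩ := hst
  obtain ⟨c, hc, hc_lt⟩ := exists_between (lt_min hε (lt_min (sub_pos.2 hi) (sub_pos.2 hj)))
  simp only [lt_min_iff] at hc_lt
  obtain ⟨hcε, hci, hcj⟩ := hc_lt
  have hui : util C c i h < util C c i (addE h i j) := by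
    linarith [util_addE_left_sub C c h hne hadj]
  have huj : util C c j h < util C c j (addE h i j) := by
    linarith [util_addE_right_sub C c h hne hadj]
  exact (hstable c hc hcε).1 i j hne hadj ⟨hui.le, huj.le, Or.inl hui⟩

theorem centrality_delE_lt (hst : APSN C h) (hadj : h.Adj i j) : C i (delE h i j) < C i h := by
  obtain ⟨ε, hε, hstable⟩ := hst
  have hkeep := (hstable (ε / 2) (by positivity) (by linarith)).2 i j hadj
  have hloss : util C (ε / 2) i (delE h i j) ≤ util C (ε / 2) i h :=
    le_of_not_gt fun hlt => hkeep (Or.inl hlt)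
  have hgain := util_addE_left_sub C (ε / 2) (delE h i j) hadj.ne (delE_not_adj h i j)
  rw [addE_delE h hadj] at hgain
  linarith

variable {f : ℕ → ℤ}

theorem adj_of_deg_le (hst : APSN C h) (hC : ∀ i, DegreeHomophilic C i f) (hne : i ≠ j)
    (hij : (deg h j : ℤ) ≤ f (deg h i)) (hji : (deg h i : ℤ) ≤ f (deg h j)) : h.Adj i j := by
  by_contra hadj
  refine hadj (hst.adj_of_centrality_lt hne ((hC i h j hne.symm hadj).2 hij) ?_)
  rw [addE_comm]
  exact (hC j h i hne (mt h.adj_symm hadj)).2 hji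

theorem deg_le_of_adj (hst : APSN C h) (hC : ∀ i, DegreeHomophilic C i f) (hadj : h.Adj i j) :
    (deg h j : ℤ) ≤ f (deg h i - 1) + 1 := by
  set g := delE h i j
  have hg : addE g i j = h := addE_delE h hadj
  have hnadj : ¬ g.Adj i j := delE_not_adj h i j
  have hdeg := (hC i g j hadj.ne' hnadj).1 (by rw [hg]; exact hst.centrality_delE_lt hadj)
  have hdi : deg h i = deg g i + 1 := hg ▸ deg_addE_left g hadj.ne hnadj
  have hdj : deg h j = deg g j + 1 := hg ▸ deg_addE_right g hadj.ne hnadj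
  rw [hdi, hdj, Nat.add_sub_cancel]
  push_cast
  linarith

theorem adj_of_deg_mem_Icc (hst : APSN C h) (hC : ∀ i, DegreeHomophilic C i f) (hf : Monotone f)
    {r s : ℕ} (hrs : (s : ℤ) ≤ f r) (hne : i ≠ j) (hi : deg h i ∈ Set.Icc r s)
    (hj : deg h j ∈ Set.Icc r s) : h.Adj i j := by
  have hle : ∀ {a b : ℕ}, a ∈ Set.Icc r s → b ∈ Set.Icc r s → (b : ℤ) ≤ f a :=
    fun ha hb => calc (_ : ℤ) ≤ s := by exact_mod_cast hb.2
      _ ≤ f r := hrs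
      _ ≤ f _ := hf ha.1
  exact hst.adj_of_deg_le hC hne (hle hi hj) (hle hj hi)

theorem not_adj_of_deg_le_of_lt (hst : APSN C h) (hC : ∀ i, DegreeHomophilic C i f) {s t : ℕ}
    (ht : ∀ r : ℕ, (s : ℤ) ≤ f r → t ≤ r) (hi : deg h i ≤ t) (hj : s < deg h j) :
    ¬ h.Adj i j := by
  intro hadj
  have hpos := deg_pos_of_adj h hadj
  have hf_lt : f (deg h i - 1) < s := lt_of_not_ge fun hge => by have := ht _ hge; omega
  have hdeg := hst.deg_le_of_adj hC hadj
  omega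

end APSN

theorem statement_5_general {V : Type*} [Fintype V] (C : V → SimpleGraph V → ℝ) (f : ℕ → ℤ)
    (hf : StrictMono f)
    (hC : ∀ i, DegreeHomophilic C i f)
    (h : SimpleGraph V) (hAPSN : APSN C h)
    -- `m` is the maximum degree of `h`
    (m : ℕ) (hm : ∀ i, deg h i ≤ m)
    -- `ns 1 = n₁*` is the least `k` with `f k ≥ m`; `ns k = n_k*` is the least `r`
    -- with `f r ≥ n_{k-1}*`, for `k ≥ 2`
    (ns : ℕ → ℕ)
    (hns1 : (m : ℤ) ≤ f (ns 1) ∧ ∀ k : ℕ, (m : ℤ) ≤ f k → ns 1 ≤ k)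
    (hnsk : ∀ k : ℕ, 2 ≤ k →
      ((ns (k - 1) : ℤ) ≤ f (ns k) ∧ ∀ r : ℕ, (ns (k - 1) : ℤ) ≤ f r → ns k ≤ r)) :
    -- (a)
    (∀ i j : V, i ≠ j → ns 1 ≤ deg h i → ns 1 ≤ deg h j → h.Adj i j) ∧
    -- (b)
    (∀ k : ℕ, 2 ≤ k → ∀ i j : V, i ≠ j →
      ns k ≤ deg h i → deg h i ≤ ns (k - 1) → ns k ≤ deg h j → deg h j ≤ ns (k - 1) →
      h.Adj i j) ∧
    -- (c)
    (∀ k : ℕ, 2 ≤ k → ∀ i j : V, deg h i ≤ ns k → ns (k - 1) < deg h j → ¬ h.Adj i j) := by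
  refine ⟨fun i j hne hi hj => ?_, fun k hk i j hne hi hi' hj hj' => ?_,
    fun k hk i j hi hj => ?_⟩
  · exact hAPSN.adj_of_deg_mem_Icc hC hf.monotone hns1.1 hne ⟨hi, hm i⟩ ⟨hj, hm j⟩
  · exact hAPSN.adj_of_deg_mem_Icc hC hf.monotone (hnsk k hk).1 hne ⟨hi, hi'⟩ ⟨hj, hj'⟩
  · exact hAPSN.not_adj_of_deg_le_of_lt hC (hnsk k hk).2 hi hj

theorem statement_5 {V : Type*} [Fintype V] (C : V → SimpleGraph V → ℝ) (f : ℕ → ℤ)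
    (hf : StrictMono f) (hf0 : f 0 = -1) (hfx : ∀ x : ℕ, 1 ≤ x → (x : ℤ) ≤ f x)
    (hC : ∀ i, DegreeHomophilic C i f)
    (h : SimpleGraph V) (hAPSN : APSN C h)
    -- `m` is the maximum degree of `h`
    (m : ℕ) (hm : ∀ i, deg h i ≤ m) (hm' : ∃ i, deg h i = m)
    -- `ns 1 = n₁*` is the least `k` with `f k ≥ m`; `ns k = n_k*` is the least `r`
    -- with `f r ≥ n_{k-1}*`, for `k ≥ 2`
    (ns : ℕ → ℕ)
    (hns1 : (m : ℤ) ≤ f (ns 1) ∧ ∀ k : ℕ, (m : ℤ) ≤ f k → ns 1 ≤ k)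
    (hnsk : ∀ k : ℕ, 2 ≤ k →
      ((ns (k - 1) : ℤ) ≤ f (ns k) ∧ ∀ r : ℕ, (ns (k - 1) : ℤ) ≤ f r → ns k ≤ r)) :
    -- (a)
    (∀ i j : V, i ≠ j → ns 1 ≤ deg h i → ns 1 ≤ deg h j → h.Adj i j) ∧
    -- (b)
    (∀ k : ℕ, 2 ≤ k → ∀ i j : V, i ≠ j →
      ns k ≤ deg h i → deg h i ≤ ns (k - 1) → ns k ≤ deg h j → deg h j ≤ ns (k - 1) →
      h.Adj i j) ∧
    -- (c)
    (∀ k : ℕ, 2 ≤ k → ∀ i j : V, deg h i ≤ ns k → ns (k - 1) < deg h j → ¬ h.Adj i j) :=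
  statement_5_general C f hf hC h hAPSN m hm ns hns1 hnsk
end

section
/- In the eccentricity centrality game, if g is an APSN then every vertex belonging to a connected component of g with at least three vertices has degree at least two (equivalently, no component of size ≥ 3 of an APSN contains a pendant vertex). -/
open SimpleGraph

open scoped Classical in
/-- Eccentricity of `i` in `g`: the maximum distance from `i` to a vertex of its
connected component (`0` for an isolated vertex). -/
noncomputable def ecc {V : Type*} [Fintype V] (g : SimpleGraph V) (i : V) : ℕ :=
  Finset.univ.sup (fun j => if g.Reachable i j then g.dist i j else 0)

open scoped Classical in
/-- Eccentricity centrality of `i` in `g`: `0` if `i` is isolated,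
`(n-1)/ecc_g(i)` otherwise. -/
noncomputable def Cecc {V : Type*} [Fintype V] (g : SimpleGraph V) (i : V) : ℝ :=
  if ∃ j, g.Adj i j then ((Fintype.card V : ℝ) - 1) / (ecc g i : ℝ) else 0

/-!
Suppose a vertex `i` of a component with at least three vertices had degree below two. It cannot
be isolated, so it is a pendant vertex with unique neighbour `k`, and the component contains a
third vertex `x₀`. A shortest path between two vertices other than `i` never uses the edge `ik`
(a trail meets a vertex other than its endpoints in an even number of edges), so deleting `ik`
keeps `k` linked to `x₀` and does not increase any distance from `k`; since `i` leaves the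
component of `k`, the eccentricity of `k` does not grow and its centrality does not drop. Thus `k`
saves the edge cost `c > 0` by cutting `ik`, contradicting pairwise stability at small `c`.
-/

namespace SimpleGraph

variable {V : Type*} {g : SimpleGraph V}

lemma Reachable.exists_adj_of_ne {i x : V} (hr : g.Reachable i x) (hne : i ≠ x) :
    ∃ j, g.Adj i j := by
  obtain ⟨p⟩ := hr
  exact ⟨p.snd, p.adj_snd (Walk.not_nil_of_ne hne)⟩

lemma exists_forall_adj_eq_of_ncard_neighborSet_lt_two [Finite V] {i : V}
    (hdeg : (g.neighborSet i).ncard < 2) (hi : ∃ j, g.Adj i j) :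
    ∃ k, g.Adj i k ∧ ∀ j, g.Adj i j → j = k := by
  obtain ⟨k, hik⟩ := hi
  refine ⟨k, hik, fun j hij => ?_⟩
  by_contra hjk
  have hpair : ({j, k} : Set V) ⊆ g.neighborSet i := by
    rintro _ (rfl | rfl) <;> assumption
  have := Set.ncard_le_ncard hpair
  rw [Set.ncard_pair hjk] at this
  omega

variable {i k : V}

lemma Walk.IsTrail.pendant_edge_notMem_edges {x y : V} {p : g.Walk x y} (hp : p.IsTrail)
    (hx : x ≠ i) (hy : y ≠ i) (hi : ∀ j, g.Adj i j → j = k) : s(i, k) ∉ p.edges := by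
  classical
  intro hmem
  have hcount : p.edges.countP (fun e => i ∈ e) = p.edges.count s(i, k) := by
    rw [List.count_eq_countP]
    refine List.countP_congr fun e he => ?_
    simp only [beq_iff_eq, decide_eq_true_eq]
    constructor
    · intro hie
      obtain ⟨j, rfl⟩ := Sym2.mem_iff_exists.mp hie
      rw [hi j (p.edges_subset_edgeSet he)]
    · rintro rfl
      exact Sym2.mem_mk_left i k
  have heven := (hp.even_countP_edges_iff i).mpr fun _ => ⟨hx.symm, hy.symm⟩
  rw [hcount, List.count_eq_one_of_mem hp.edges_nodup hmem] at heven
  exact Nat.not_even_one heven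

lemma Reachable.exists_walk_deleteEdges_pendant {x y : V} (hr : g.Reachable x y) (hx : x ≠ i)
    (hy : y ≠ i) (hi : ∀ j, g.Adj i j → j = k) :
    ∃ q : (g.deleteEdges {s(i, k)}).Walk x y, q.length = g.dist x y := by
  obtain ⟨p, hp, hlen⟩ := hr.exists_path_of_dist
  exact ⟨p.toDeleteEdge s(i, k) (hp.isTrail.pendant_edge_notMem_edges hx hy hi),
    by rw [Walk.length_transfer, hlen]⟩

lemma not_adj_deleteEdges_pendant (hi : ∀ j, g.Adj i j → j = k) (j : V) :
    ¬ (g.deleteEdges {s(i, k)}).Adj i j := by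
  rw [deleteEdges_adj]
  rintro ⟨hij, hne⟩
  exact hne (hi j hij ▸ rfl)

end SimpleGraph

open SimpleGraph

section Eccentricity

variable {V : Type*} [Fintype V] {g g' : SimpleGraph V} {k : V}

lemma one_le_ecc_of_adj {j : V} (hkj : g.Adj k j) : 1 ≤ ecc g k := by
  classical
  unfold ecc
  refine le_trans ?_ (Finset.le_sup (Finset.mem_univ j))
  simp only [if_pos hkj.reachable, dist_eq_one_iff_adj.mpr hkj, le_refl]

lemma ecc_le_ecc_of_dist_le (h : ∀ j, g'.Reachable k j → g.Reachable k j ∧ g'.dist k j ≤ g.dist k j) :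
    ecc g' k ≤ ecc g k := by
  unfold ecc
  refine Finset.sup_mono_fun fun j _ => ?_
  split_ifs with h' hg
  · exact (h j h').2
  · exact absurd (h j h').1 hg
  all_goals exact Nat.zero_le _

lemma ecc_deleteEdges_pendant_le {i : V} (hik : g.Adj i k) (hi : ∀ j, g.Adj i j → j = k) :
    ecc (g.deleteEdges {s(i, k)}) k ≤ ecc g k := by
  refine ecc_le_ecc_of_dist_le fun j hj => ?_
  have hji : j ≠ i := by
    rintro rfl
    obtain ⟨l, hl⟩ := hj.symm.exists_adj_of_ne hik.ne
    exact not_adj_deleteEdges_pendant hi l hl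
  have hg := hj.mono (deleteEdges_le _)
  obtain ⟨q, hq⟩ := hg.exists_walk_deleteEdges_pendant hik.ne' hji hi
  exact ⟨hg, hq ▸ dist_le q⟩

lemma Cecc_le_Cecc_of_ecc_le (h' : ∃ j, g'.Adj k j) (hecc : ecc g' k ≤ ecc g k) :
    Cecc g k ≤ Cecc g' k := by
  obtain ⟨j, hkj⟩ := h'
  have hn : (0 : ℝ) ≤ (Fintype.card V : ℝ) - 1 :=
    sub_nonneg.mpr (Nat.one_le_cast.mpr (Fintype.card_pos_iff.mpr ⟨k⟩))
  have hpos : (0 : ℝ) < ecc g' k := by exact_mod_cast one_le_ecc_of_adj hkj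
  unfold Cecc
  rw [if_pos (show ∃ j, g'.Adj k j from ⟨j, hkj⟩)]
  split_ifs
  · exact div_le_div_of_nonneg_left hn hpos (by exact_mod_cast hecc)
  · exact div_nonneg hn hpos.le

end Eccentricity

section Game

variable {V : Type*} {C : V → SimpleGraph V → ℝ} {g : SimpleGraph V}

lemma deg_delE_add_one [Finite V] {i k : V} (hik : g.Adj i k) :
    deg (delE g i k) k + 1 = deg g k := by
  have hnbr : (delE g i k).neighborSet k = g.neighborSet k \ {i} := by
    ext j
    simp only [delE, mem_neighborSet, deleteEdges_adj, Set.mem_sdiff, Set.mem_singleton_iff]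
    refine and_congr_right fun _ => not_congr ?_
    rw [Sym2.eq_swap (a := i), Sym2.congr_right]
  rw [deg, deg, Nat.card_coe_set_eq, Nat.card_coe_set_eq, hnbr]
  exact Set.ncard_sdiff_singleton_add_one hik.symm

lemma improvingDel_of_centrality_le [Finite V] {c : ℝ} (hc : 0 < c) {i k : V} (hik : g.Adj i k)
    (hC : C k g ≤ C k (delE g i k)) : ImprovingDel C c g i k := by
  right
  have hdeg : (deg g k : ℝ) = deg (delE g i k) k + 1 := by
    exact_mod_cast (deg_delE_add_one hik).symm
  unfold util
  rw [hdeg]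
  linarith

lemma APSN.exists_pairwiseStable (h : APSN C g) : ∃ c, 0 < c ∧ PairwiseStable C c g := by
  obtain ⟨ε, hε, hstable⟩ := h
  exact ⟨ε / 2, half_pos hε, hstable _ (half_pos hε) (half_lt_self hε)⟩

end Game

theorem statement_12 {V : Type*} [Fintype V] (g : SimpleGraph V)
    (h : APSN (fun v h => Cecc h v) g) :
    ∀ i : V, 3 ≤ Nat.card {j : V | g.Reachable i j} → 2 ≤ deg g i := by
  intro i hcard
  by_contra! hdeg
  rw [Nat.card_coe_set_eq] at hcard
  rw [deg, Nat.card_coe_set_eq] at hdeg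
  obtain ⟨x, hx, hxi⟩ := Set.exists_mem_notMem_of_ncard_lt_ncard (s := {i})
    (t := {j | g.Reachable i j})
    (by rw [Set.ncard_singleton]; omega)
  obtain ⟨k, hik, hi⟩ := exists_forall_adj_eq_of_ncard_neighborSet_lt_two hdeg
    (Reachable.exists_adj_of_ne hx (Ne.symm hxi))
  obtain ⟨x₀, hx₀, hx₀ik⟩ := Set.exists_mem_notMem_of_ncard_lt_ncard (s := {i, k})
    (t := {j | g.Reachable i j})
    (by have := Set.ncard_insert_le i {k}; rw [Set.ncard_singleton] at this; omega)
  have hx₀i : x₀ ≠ i := fun h => hx₀ik (Or.inl h)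
  have hx₀k : k ≠ x₀ := fun h => hx₀ik (Or.inr h.symm)
  obtain ⟨q, -⟩ :=
    (hik.reachable.symm.trans hx₀).exists_walk_deleteEdges_pendant hik.ne' hx₀i hi
  have hk : ∃ j, (delE g i k).Adj k j := q.reachable.exists_adj_of_ne hx₀k
  obtain ⟨c, hc, hstable⟩ := h.exists_pairwiseStable
  exact hstable.2 i k hik
    (improvingDel_of_centrality_le hc hik (Cecc_le_Cecc_of_ecc_le hk (ecc_deleteEdges_pendant_le hik hi)))
end
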